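/- arXiv:2503.12787 — 5 statements merged into one kernel-verified Lean document; each statement's English description precedes it below -/
import Mathlib

section
/- Let γ : ℝ → ℝ be a Lipschitz continuous extended class-K function (strictly monotone increasing with γ(0) = 0), let E = EuclideanSpace ℝ (Fin n), let h : E → ℝ be continuously differentiable, let f : E → E, g : E → (EuclideanSpace ℝ (Fin m) →L[ℝ] E), and u : E → EuclideanSpace ℝ (Fin m). Suppose x : ℝ → E is differentiable and satisfies the control-affine dynamics x′(t) = f(x(t)) + g(x(t))(u(x(t))) for all t ≥ 0, and the control-barrier-function inequality holds along the trajectory: for all t ≥ 0, (fderiv ℝ h (x(t)))(f(x(t)) + g(x(t))(u(x(t)))) ≥ -γ(h(x(t))). If h(x(0)) ≥ 0, then h(x(t)) ≥ 0 for all t ≥ 0; that is, the zero super-level set C = {y | h(y) ≥ 0} is forward invariant under the closed-loop system. -/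
/-- Forward invariance of the zero super-level set of a control barrier function:
if `h` is continuously differentiable, `γ` is a Lipschitz extended class-K function,
and along the closed-loop trajectory `x` of the control-affine system the CBF
inequality holds, then `h (x 0) ≥ 0` implies `h (x t) ≥ 0` for all `t ≥ 0`. -/
theorem cbf_forward_invariance
    {n m : ℕ} (γ : ℝ → ℝ) (K : NNReal)
    (hγ_lip : LipschitzWith K γ) (hγ_mono : StrictMono γ) (hγ0 : γ 0 = 0)
    (h : EuclideanSpace ℝ (Fin n) → ℝ) (hh : ContDiff ℝ 1 h)
    (f : EuclideanSpace ℝ (Fin n) → EuclideanSpace ℝ (Fin n))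
    (g : EuclideanSpace ℝ (Fin n) →
      (EuclideanSpace ℝ (Fin m) →L[ℝ] EuclideanSpace ℝ (Fin n)))
    (u : EuclideanSpace ℝ (Fin n) → EuclideanSpace ℝ (Fin m))
    (x : ℝ → EuclideanSpace ℝ (Fin n)) (hx : Differentiable ℝ x)
    (hdyn : ∀ t : ℝ, 0 ≤ t → deriv x t = f (x t) + g (x t) (u (x t)))
    (hcbf : ∀ t : ℝ, 0 ≤ t →
      fderiv ℝ h (x t) (f (x t) + g (x t) (u (x t))) ≥ -γ (h (x t)))
    (h0 : h (x 0) ≥ 0) :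
    ∀ t : ℝ, 0 ≤ t → h (x t) ≥ 0 := by
  have hhd : Differentiable ℝ h := hh.differentiable one_ne_zero
  set y : ℝ → ℝ := fun t => h (x t) with hy_def
  have hy : Differentiable ℝ y := hhd.comp hx
  -- chain rule
  have hderiv : ∀ t : ℝ, HasDerivAt y (fderiv ℝ h (x t) (deriv x t)) t := by
    intro t
    exact (hhd (x t)).hasFDerivAt.comp_hasDerivAt t (hx t).hasDerivAt
  have hderiv' : ∀ t : ℝ, 0 ≤ t → deriv y t = fderiv ℝ h (x t) (f (x t) + g (x t) (u (x t))) := by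
    intro t ht
    rw [(hderiv t).deriv, hdyn t ht]
  -- main claim by contradiction
  intro t₁ ht₁
  by_contra hneg
  push_neg at hneg
  have hy0 : 0 ≤ y 0 := h0
  have ht₁pos : 0 < t₁ := by
    rcases lt_or_eq_of_le ht₁ with hlt | heq
    · exact hlt
    · exact absurd hneg (by rw [← heq]; exact not_lt.2 hy0)
  set S : Set ℝ := {t | t ∈ Set.Icc 0 t₁ ∧ 0 ≤ y t} with hS_def
  have hS0 : (0 : ℝ) ∈ S := ⟨⟨le_rfl, le_of_lt ht₁pos⟩, hy0⟩
  have hSne : S.Nonempty := ⟨0, hS0⟩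
  have hSbdd : BddAbove S := ⟨t₁, fun t ht => ht.1.2⟩
  set s : ℝ := sSup S with hs_def
  have hSclosed : IsClosed S := by
    apply IsClosed.inter isClosed_Icc
    exact isClosed_le continuous_const (hy.continuous)
  have hsS : s ∈ S := hSclosed.csSup_mem hSne hSbdd
  have hs0 : 0 ≤ s := hsS.1.1
  have hst₁ : s ≤ t₁ := hsS.1.2
  have hys : 0 ≤ y s := hsS.2
  have hst₁lt : s < t₁ := by
    rcases lt_or_eq_of_le hst₁ with hlt | heq
    · exact hlt
    · exact absurd hneg (by rw [← heq]; exact not_lt.2 hys)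
  -- on (s, t₁], y < 0
  have hneg' : ∀ t ∈ Set.Ioc s t₁, y t < 0 := by
    intro t ht
    by_contra hge
    push_neg at hge
    have : t ∈ S := ⟨⟨le_trans hs0 ht.1.le, ht.2⟩, hge⟩
    exact absurd (le_csSup hSbdd this) (not_le.2 ht.1)
  -- deriv y ≥ 0 on interior
  have hmono : MonotoneOn y (Set.Icc s t₁) := by
    apply monotoneOn_of_deriv_nonneg (convex_Icc s t₁) hy.continuous.continuousOn
      (fun t _ => (hy t).differentiableWithinAt)
    intro t ht
    rw [interior_Icc] at ht
    have ht0 : 0 ≤ t := le_trans hs0 ht.1.le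
    have hyt : y t < 0 := hneg' t ⟨ht.1, ht.2.le⟩
    have hγlt : γ (y t) < 0 := by
      calc γ (y t) < γ 0 := hγ_mono hyt
        _ = 0 := hγ0
    have := hcbf t ht0
    rw [hderiv' t ht0]
    linarith
  have := hmono ⟨le_rfl, hst₁⟩ ⟨hst₁, le_rfl⟩ hst₁
  linarith
end

section
/- Let γ : ℝ → ℝ be a Lipschitz continuous extended class-K function (strictly monotone increasing with γ(0) = 0). Let φ : ℝ → ℝ be differentiable and satisfy the differential inequality φ′(t) ≥ -γ(φ(t)) for all t ≥ 0. If φ(0) ≥ 0, then φ(t) ≥ 0 for all t ≥ 0. -/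
/-! Wherever `φ < 0` we have `φ' ≥ -γ(φ) > 0`, so after the last time `s` at which `φ ≥ 0`,
`φ` is strictly increasing; hence `φ` cannot end up below `φ s ≥ 0`. -/

open Set

theorem ContinuousOn.exists_last_nonneg {α : Type*} [ConditionallyCompleteLinearOrder α]
    [TopologicalSpace α] [OrderTopology α] {φ : α → ℝ} {a b : α} (hab : a ≤ b)
    (hφ : ContinuousOn φ (Icc a b)) (ha : 0 ≤ φ a) :
    ∃ s ∈ Icc a b, 0 ≤ φ s ∧ ∀ t ∈ Ioc s b, φ t < 0 := by
  set S := Icc a b ∩ φ ⁻¹' Ici 0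
  have hS : IsCompact S := isCompact_Icc.of_isClosed_subset
    (hφ.preimage_isClosed_of_isClosed isClosed_Icc isClosed_Ici) inter_subset_left
  obtain ⟨s, ⟨hs, hφs⟩, hmax⟩ := hS.exists_isGreatest ⟨a, ⟨left_mem_Icc.2 hab, ha⟩⟩
  refine ⟨s, hs, hφs, fun t ht => ?_⟩
  by_contra! hφt
  exact (hmax ⟨⟨hs.1.trans ht.1.le, ht.2⟩, hφt⟩).not_gt ht.1

theorem nonneg_of_deriv_pos_of_neg {φ : ℝ → ℝ} {a b : ℝ} (hab : a ≤ b)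
    (hφ : ContinuousOn φ (Icc a b)) (ha : 0 ≤ φ a)
    (hpos : ∀ t ∈ Ioo a b, φ t < 0 → 0 < deriv φ t) : 0 ≤ φ b := by
  by_contra! hb
  obtain ⟨s, hs, hφs, hneg⟩ := hφ.exists_last_nonneg hab ha
  have hsb : s < b := hs.2.lt_of_ne fun h => (h ▸ hb).not_ge hφs
  have hmono : StrictMonoOn φ (Icc s b) := by
    refine strictMonoOn_of_deriv_pos (convex_Icc s b) (hφ.mono (Icc_subset_Icc_left hs.1))
      fun t ht => ?_
    rw [interior_Icc] at ht
    exact hpos t ⟨hs.1.trans_lt ht.1, ht.2⟩ (hneg t (Ioo_subset_Ioc_self ht))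
  have hlt := hmono (left_mem_Icc.2 hsb.le) (right_mem_Icc.2 hsb.le) hsb
  linarith

theorem scalar_cbf_forward_invariance_general
    (γ : ℝ → ℝ) (hγ_mono : StrictMono γ) (hγ0 : γ 0 = 0)
    (φ : ℝ → ℝ) (hφ : Differentiable ℝ φ)
    (hineq : ∀ t : ℝ, 0 ≤ t → deriv φ t ≥ -γ (φ t))
    (h0 : φ 0 ≥ 0) :
    ∀ t : ℝ, 0 ≤ t → φ t ≥ 0 := by
  intro t ht
  refine nonneg_of_deriv_pos_of_neg ht hφ.continuous.continuousOn h0 fun u hu hneg => ?_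
  have hγneg : γ (φ u) < 0 := hγ0 ▸ hγ_mono hneg
  linarith [hineq u hu.1.le]

/-- Scalar comparison form of forward invariance: if `γ` is a Lipschitz extended
class-K function and `φ` satisfies `φ' t ≥ -γ (φ t)` for all `t ≥ 0`, then
`φ 0 ≥ 0` implies `φ t ≥ 0` for all `t ≥ 0`. -/
theorem scalar_cbf_forward_invariance
    (γ : ℝ → ℝ) (K : NNReal)
    (hγ_lip : LipschitzWith K γ) (hγ_mono : StrictMono γ) (hγ0 : γ 0 = 0)
    (φ : ℝ → ℝ) (hφ : Differentiable ℝ φ)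
    (hineq : ∀ t : ℝ, 0 ≤ t → deriv φ t ≥ -γ (φ t))
    (h0 : φ 0 ≥ 0) :
    ∀ t : ℝ, 0 ≤ t → φ t ≥ 0 :=
  scalar_cbf_forward_invariance_general γ hγ_mono hγ0 φ hφ hineq h0
end

section
/- Let γ : ℝ → ℝ be a Lipschitz continuous extended class-K function (strictly monotone increasing with γ(0) = 0). Let φ : ℝ → ℝ be differentiable and satisfy φ′(t) ≥ -γ(φ(t)) for all t ≥ 0. Then for every ε > 0 and every t₀ ≥ 0 with φ(t₀) ≥ -ε, one has φ(t) ≥ -ε for all t ≥ t₀; that is, each sub-level region {s | s ≥ -ε} is forward invariant for the scalar differential inequality. -/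
/-! Below the level `-ε < 0`, monotonicity of `γ` and `γ 0 = 0` give `γ (-ε) < 0`, so wherever
`φ` touches `-ε` its derivative is at least `-γ (-ε) > 0`: the trajectory is pushed back up and
can never cross the level (Mathlib's fencing lemma with the constant barrier `-ε`). -/

theorem le_of_deriv_pos_of_eq {φ : ℝ → ℝ} (hφ : Differentiable ℝ φ) {a c : ℝ}
    (ha : c ≤ φ a) (hpos : ∀ x, a ≤ x → φ x = c → 0 < deriv φ x) {b : ℝ} (hab : a ≤ b) :
    c ≤ φ b :=
  image_le_of_deriv_right_lt_deriv_boundary' (f := fun _ => c) (f' := fun _ => 0)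
    continuousOn_const (fun _ _ => hasDerivWithinAt_const _ _ _) ha
    hφ.continuous.continuousOn (fun y _ => (hφ y).hasDerivAt.hasDerivWithinAt)
    (fun y hy hyc => hpos y hy.1 hyc.symm) ⟨hab, le_rfl⟩

theorem scalar_cbf_eps_invariance_general
    (γ : ℝ → ℝ)
    (hγ_mono : StrictMono γ) (hγ0 : γ 0 = 0)
    (φ : ℝ → ℝ) (hφ : Differentiable ℝ φ)
    (hineq : ∀ t : ℝ, 0 ≤ t → deriv φ t ≥ -γ (φ t)) :
    ∀ ε : ℝ, 0 < ε → ∀ t₀ : ℝ, 0 ≤ t₀ → φ t₀ ≥ -ε →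
      ∀ t : ℝ, t₀ ≤ t → φ t ≥ -ε := by
  intro ε hε t₀ ht₀ hφt₀ t ht
  have hγε : γ (-ε) < 0 := hγ0 ▸ hγ_mono (neg_lt_zero.2 hε)
  refine le_of_deriv_pos_of_eq hφ hφt₀ (fun x hx hφx => ?_) ht
  have hderiv := hineq x (ht₀.trans hx)
  rw [hφx] at hderiv
  linarith

/-- Forward invariance of the ε-enlarged super-level sets: if `γ` is a Lipschitz
extended class-K function and `φ' t ≥ -γ (φ t)` for all `t ≥ 0`, then for every
`ε > 0` and every `t₀ ≥ 0` with `φ t₀ ≥ -ε`, one has `φ t ≥ -ε` for all `t ≥ t₀`. -/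
theorem scalar_cbf_eps_invariance
    (γ : ℝ → ℝ) (K : NNReal)
    (hγ_lip : LipschitzWith K γ) (hγ_mono : StrictMono γ) (hγ0 : γ 0 = 0)
    (φ : ℝ → ℝ) (hφ : Differentiable ℝ φ)
    (hineq : ∀ t : ℝ, 0 ≤ t → deriv φ t ≥ -γ (φ t)) :
    ∀ ε : ℝ, 0 < ε → ∀ t₀ : ℝ, 0 ≤ t₀ → φ t₀ ≥ -ε →
      ∀ t : ℝ, t₀ ≤ t → φ t ≥ -ε :=
  scalar_cbf_eps_invariance_general γ hγ_mono hγ0 φ hφ hineq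
end

section
/- Let γ : ℝ → ℝ be a Lipschitz continuous extended class-K function (strictly monotone increasing with γ(0) = 0). Let φ : ℝ → ℝ be differentiable and satisfy φ′(t) ≥ -γ(φ(t)) for all t ≥ 0. Then liminf_{t → ∞} φ(t) ≥ 0; equivalently, for every ε > 0 there exists T ≥ 0 such that φ(t) ≥ -ε for all t ≥ T. -/
/-- Attractivity of the zero super-level set in the scalar comparison form: if `γ`
is a Lipschitz extended class-K function and `φ' t ≥ -γ (φ t)` for all `t ≥ 0`,
then for every `ε > 0` there exists `T ≥ 0` such that `φ t ≥ -ε` for all `t ≥ T`,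
i.e. `liminf_{t → ∞} φ t ≥ 0`. -/
theorem scalar_cbf_attractivity
    (γ : ℝ → ℝ) (K : NNReal)
    (hγ_lip : LipschitzWith K γ) (hγ_mono : StrictMono γ) (hγ0 : γ 0 = 0)
    (φ : ℝ → ℝ) (hφ : Differentiable ℝ φ)
    (hineq : ∀ t : ℝ, 0 ≤ t → deriv φ t ≥ -γ (φ t)) :
    ∀ ε : ℝ, 0 < ε → ∃ T : ℝ, 0 ≤ T ∧ ∀ t : ℝ, T ≤ t → φ t ≥ -ε := by
  intro ε hε
  have hγε : γ (-ε) < 0 := by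
    have := hγ_mono (show (-ε:ℝ) < 0 by linarith); rwa [hγ0] at this
  set c : ℝ := -γ (-ε) with hc
  have hc0 : 0 < c := by simp only [hc]; linarith
  -- forward invariance of {φ ≥ -ε}
  have inv : ∀ s t : ℝ, 0 ≤ s → s ≤ t → -ε ≤ φ s → -ε ≤ φ t := by
    intro s t hs hst hφs
    by_contra hlt
    push_neg at hlt
    set A := {r | r ∈ Set.Icc s t ∧ -ε ≤ φ r} with hA
    have hA_ne : A.Nonempty := ⟨s, ⟨le_refl s, hst⟩, hφs⟩
    have hA_bdd : BddAbove A := ⟨t, fun r hr => hr.1.2⟩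
    set u := sSup A with hu
    have hAclosed : IsClosed A := by
      have : A = Set.Icc s t ∩ φ ⁻¹' Set.Ici (-ε) := rfl
      rw [this]; exact isClosed_Icc.inter (isClosed_Ici.preimage hφ.continuous)
    have huA : u ∈ A := hAclosed.csSup_mem hA_ne hA_bdd
    have hut : u < t := by
      rcases lt_or_eq_of_le huA.1.2 with h | h
      · exact h
      · exact absurd (h ▸ huA.2) (not_le.mpr hlt)
    have hder : ∀ r ∈ Set.Ioo u t, 0 < deriv φ r := by
      intro r hr
      have hrA : φ r < -ε := by
        by_contra h
        push_neg at h
        have hmem : r ∈ A := ⟨⟨le_trans huA.1.1 hr.1.le, hr.2.le⟩, h⟩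
        exact absurd (le_csSup hA_bdd hmem) (not_le.mpr hr.1)
      have hr0 : 0 ≤ r := le_trans hs (le_trans huA.1.1 hr.1.le)
      have h1 := hineq r hr0
      have h2 := hγ_mono hrA
      linarith
    have hmono : StrictMonoOn φ (Set.Icc u t) :=
      strictMonoOn_of_deriv_pos (convex_Icc u t) hφ.continuous.continuousOn
        (by intro r hr; rw [interior_Icc] at hr; exact hder r hr)
    have := hmono ⟨le_refl u, hut.le⟩ ⟨hut.le, le_refl t⟩ hut
    linarith [huA.2]
  by_cases hcase : ∃ T : ℝ, 0 ≤ T ∧ -ε ≤ φ T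
  · obtain ⟨T, hT0, hT⟩ := hcase
    exact ⟨T, hT0, fun t ht => inv T t hT0 (le_trans hT0 ht |> fun _ => ht) hT⟩
  · push_neg at hcase
    exfalso
    have hder : ∀ t : ℝ, 0 ≤ t → c ≤ deriv φ t := by
      intro t ht
      have hφt := hcase t ht
      have h1 := hγ_mono hφt
      have h2 := hineq t ht
      simp only [hc]; linarith
    have hmono : MonotoneOn (fun t => φ t - c * t) (Set.Ici (0:ℝ)) := by
      apply monotoneOn_of_deriv_nonneg (convex_Ici 0) ((hφ.sub (by fun_prop)).continuous.continuousOn)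
        (fun t ht => ((hφ t).sub (by fun_prop)).differentiableWithinAt)
      intro t ht
      rw [interior_Ici] at ht
      have hd : HasDerivAt (fun t => φ t - c * t) (deriv φ t - c * 1) t :=
        (hφ t).hasDerivAt.sub ((hasDerivAt_id t).const_mul c)
      show 0 ≤ deriv (fun t => φ t - c * t) t
      rw [hd.deriv]
      have := hder t ht.le
      nlinarith
    set t₀ : ℝ := max 0 ((-ε - φ 0) / c) with ht₀
    have ht₀0 : 0 ≤ t₀ := le_max_left _ _
    have h := hmono (Set.self_mem_Ici) (Set.mem_Ici.mpr ht₀0) ht₀0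
    simp only [mul_zero, sub_zero] at h
    have hct : -ε - φ 0 ≤ c * t₀ := by
      have : (-ε - φ 0) / c ≤ t₀ := le_max_right _ _
      calc -ε - φ 0 = ((-ε - φ 0) / c) * c := by field_simp
        _ ≤ t₀ * c := by nlinarith
        _ = c * t₀ := mul_comm _ _
    have := hcase t₀ ht₀0
    linarith
end

section
/- Let γ : ℝ → ℝ be a continuous extended class-K function (strictly monotone increasing with γ(0) = 0). Let φ : ℝ → ℝ be differentiable and satisfy φ′(t) ≥ -γ(φ(t)) for all t ≥ 0. If φ(t) < 0 for all t ≥ 0, then φ(t) tends to 0 as t → ∞. -/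
open Filter Set

/-- Task completion: if `γ` is a continuous extended class-K function,
`φ' t ≥ -γ (φ t)` for all `t ≥ 0`, and `φ t < 0` for all `t ≥ 0`, then
`φ t → 0` as `t → ∞`. -/
theorem scalar_cbf_convergence_to_zero
    (γ : ℝ → ℝ) (hγ_cont : Continuous γ)
    (hγ_mono : StrictMono γ) (hγ0 : γ 0 = 0)
    (φ : ℝ → ℝ) (hφ : Differentiable ℝ φ)
    (hineq : ∀ t : ℝ, 0 ≤ t → deriv φ t ≥ -γ (φ t))
    (hneg : ∀ t : ℝ, 0 ≤ t → φ t < 0) :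
    Filter.Tendsto φ Filter.atTop (nhds 0) := by
  -- φ is monotone on [0, ∞) since its derivative there is positive
  have hderiv_pos : ∀ t : ℝ, 0 ≤ t → 0 < deriv φ t := by
    intro t ht
    have h1 : γ (φ t) < 0 := by
      have := hγ_mono (hneg t ht)
      rwa [hγ0] at this
    have := hineq t ht
    linarith
  have hmono : MonotoneOn φ (Ici (0:ℝ)) := by
    apply monotoneOn_of_deriv_nonneg (convex_Ici 0) hφ.continuous.continuousOn
      hφ.differentiableOn
    intro x hx
    rw [interior_Ici] at hx
    exact (hderiv_pos x hx.le).le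
  -- the auxiliary monotone function ψ
  set ψ : ℝ → ℝ := fun t => φ (max t 0) with hψdef
  have hψmono : Monotone ψ := by
    intro s t hst
    exact hmono (le_max_right s 0) (le_max_right t 0) (max_le_max hst le_rfl)
  have hψbdd : BddAbove (Set.range ψ) := by
    refine ⟨0, ?_⟩
    rintro y ⟨t, rfl⟩
    exact (hneg _ (le_max_right t 0)).le
  set L : ℝ := ⨆ t, ψ t with hLdef
  have hψtend : Tendsto ψ atTop (nhds L) := tendsto_atTop_ciSup hψmono hψbdd
  have heq : ∀ᶠ t in atTop, ψ t = φ t := by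
    filter_upwards [eventually_ge_atTop (0:ℝ)] with t ht
    simp [hψdef, max_eq_left ht]
  have hφtend : Tendsto φ atTop (nhds L) := hψtend.congr' heq
  -- φ t ≤ L for t ≥ 0
  have hle : ∀ t : ℝ, 0 ≤ t → φ t ≤ L := by
    intro t ht
    have h := le_ciSup hψbdd t
    simpa [hψdef, max_eq_left ht] using h
  -- L ≤ 0
  have hL0 : L ≤ 0 := by
    have : Tendsto ψ atTop (nhds 0) → True := fun _ => trivial
    refine ciSup_le fun t => (hneg _ (le_max_right t 0)).le
  -- show L = 0
  rcases lt_or_eq_of_le hL0 with hL | hL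
  · exfalso
    set c : ℝ := -γ L with hcdef
    have hc : 0 < c := by
      have := hγ_mono hL
      rw [hγ0] at this
      simp [hcdef]; linarith
    -- deriv φ t ≥ c for t ≥ 0
    have hd : ∀ t : ℝ, 0 ≤ t → c ≤ deriv φ t := by
      intro t ht
      have h1 : γ (φ t) ≤ γ L := hγ_mono.monotone (hle t ht)
      have := hineq t ht
      simp only [hcdef]
      linarith
    -- g t = φ t - c * t is monotone on [0,∞)
    have hg : MonotoneOn (fun t => φ t - c * t) (Ici (0:ℝ)) := by
      apply monotoneOn_of_deriv_nonneg (convex_Ici 0)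
        (Continuous.continuousOn (by have := hφ.continuous; fun_prop))
        (Differentiable.differentiableOn (by fun_prop))
      intro x hx
      rw [interior_Ici] at hx
      have hcx : DifferentiableAt ℝ (fun t : ℝ => c * t) x := by fun_prop
      have heq2 : deriv (fun t => φ t - c * t) x = deriv φ x - c := by
        rw [deriv_fun_sub (hφ x) hcx, deriv_const_mul _ differentiableAt_fun_id, deriv_id'', mul_one]
      rw [heq2]
      linarith [hd x hx.le]
    set T : ℝ := max 0 ((L - φ 0) / c + 1) with hTdef
    have hT0 : (0:ℝ) ≤ T := le_max_left _ _
    have hgT := hg (le_refl (0:ℝ)) hT0 hT0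
    simp only [mul_zero, sub_zero] at hgT
    -- φ T ≥ φ 0 + c * T
    have hφT : φ 0 + c * T ≤ φ T := by linarith
    have hTbig : (L - φ 0) / c < T := lt_of_lt_of_le (lt_add_one _) (le_max_right _ _)
    have : L - φ 0 < c * T := by
      rwa [div_lt_iff₀ hc, mul_comm] at hTbig
    have := hle T hT0
    linarith
  · rwa [← hL]
end
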